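/- arXiv:1309.2528 — 2 statements merged into one kernel-verified Lean document; each statement's English description precedes it below -/
import Mathlib

section
/- Let M be a compact measure space, and let P : D(P) → L²(M), P' : D(P') → L²(M) be (densely defined) symmetric linear operators with 1 ∈ D(P) ∩ D(P'), P(1) = 0 and P'(1) = 0. Suppose Q, Q̂ ∈ L¹(M), σ ∈ D(P) ∩ D(P'), and dμ̂ = e^{2σ} dμ, and that e^{2σ} Q̂ = Q + P'(σ) + (1/2) P(σ²) pointwise (with σ² ∈ D(P)). Then ∫_M Q̂ dμ̂ = ∫_M Q dμ. -/
open MeasureTheory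

theorem integral_withDensity_ofReal_eq_integral_mul {M : Type*} [MeasurableSpace M]
    {μ : Measure M} {ρ : M → ℝ} (hρ : AEMeasurable ρ μ) (hρ_nonneg : ∀ᵐ x ∂μ, 0 ≤ ρ x)
    (g : M → ℝ) :
    ∫ x, g x ∂(μ.withDensity fun x => ENNReal.ofReal (ρ x)) = ∫ x, ρ x * g x ∂μ := by
  rw [integral_withDensity_eq_integral_toReal_smul₀ hρ.ennreal_ofReal
    (.of_forall fun _ => ENNReal.ofReal_lt_top)]
  refine integral_congr_ae ?_
  filter_upwards [hρ_nonneg] with x hx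
  rw [ENNReal.toReal_ofReal hx, smul_eq_mul]

theorem integral_eq_zero_of_symmetric_of_map_one {M : Type*} [MeasurableSpace M]
    {μ : Measure M} {T : (M → ℝ) → M → ℝ}
    (hT : ∀ f g : M → ℝ, ∫ x, T f x * g x ∂μ = ∫ x, f x * T g x ∂μ)
    (hT1 : T (fun _ => 1) = 0) (f : M → ℝ) :
    ∫ x, T f x ∂μ = 0 := by
  simpa [hT1] using hT f fun _ => 1

theorem stmt4_general {M : Type*} [MeasurableSpace M] (μ : Measure M)
    (P P' : (M → ℝ) →ₗ[ℝ] (M → ℝ))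
    (hPsym : ∀ f g : M → ℝ, ∫ x, P f x * g x ∂μ = ∫ x, f x * P g x ∂μ)
    (hP'sym : ∀ f g : M → ℝ, ∫ x, P' f x * g x ∂μ = ∫ x, f x * P' g x ∂μ)
    (hP1 : P (fun _ => 1) = 0) (hP'1 : P' (fun _ => 1) = 0)
    (Q Qhat σ : M → ℝ) (hσmeas : Measurable σ)
    (hQint : Integrable Q μ)
    (hP'int : Integrable (P' σ) μ)
    (hPint : Integrable (P (fun y => σ y ^ 2)) μ)
    (hpt : ∀ x, Real.exp (2 * σ x) * Qhat x
      = Q x + P' σ x + (1 / 2) * P (fun y => σ y ^ 2) x) :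
    ∫ x, Qhat x ∂(μ.withDensity fun x => ENNReal.ofReal (Real.exp (2 * σ x)))
      = ∫ x, Q x ∂μ := by
  calc ∫ x, Qhat x ∂(μ.withDensity fun x => ENNReal.ofReal (Real.exp (2 * σ x)))
      = ∫ x, Real.exp (2 * σ x) * Qhat x ∂μ :=
        integral_withDensity_ofReal_eq_integral_mul (by fun_prop)
          (.of_forall fun _ => (Real.exp_pos _).le) Qhat
    _ = ∫ x, Q x + P' σ x + (1 / 2) * P (fun y => σ y ^ 2) x ∂μ :=
        integral_congr_ae (.of_forall hpt)
    _ = ∫ x, Q x ∂μ + ∫ x, P' σ x ∂μ + (1 / 2) * ∫ x, P (fun y => σ y ^ 2) x ∂μ := by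
        rw [integral_add (f := fun x => Q x + P' σ x) (hQint.add hP'int) (hPint.const_mul _),
          integral_add hQint hP'int, integral_const_mul]
    _ = ∫ x, Q x ∂μ := by
        rw [integral_eq_zero_of_symmetric_of_map_one hP'sym hP'1,
          integral_eq_zero_of_symmetric_of_map_one hPsym hP1]
        ring

/-- Invariance of the total `Q'`-curvature: if `P`, `P'` are symmetric operators
annihilating constants, `dμ̂ = e^{2σ} dμ`, and
`e^{2σ} Q̂ = Q + P'(σ) + (1/2) P(σ²)` pointwise, then `∫ Q̂ dμ̂ = ∫ Q dμ`. -/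
theorem stmt4 {M : Type*} [MeasurableSpace M] (μ : Measure M) [IsFiniteMeasure μ]
    (P P' : (M → ℝ) →ₗ[ℝ] (M → ℝ))
    (hPsym : ∀ f g : M → ℝ, ∫ x, P f x * g x ∂μ = ∫ x, f x * P g x ∂μ)
    (hP'sym : ∀ f g : M → ℝ, ∫ x, P' f x * g x ∂μ = ∫ x, f x * P' g x ∂μ)
    (hP1 : P (fun _ => 1) = 0) (hP'1 : P' (fun _ => 1) = 0)
    (Q Qhat σ : M → ℝ) (hσmeas : Measurable σ)
    (hQint : Integrable Q μ)
    (hQhatint : Integrable (fun x => Real.exp (2 * σ x) * Qhat x) μ)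
    (hP'int : Integrable (P' σ) μ)
    (hPint : Integrable (P (fun y => σ y ^ 2)) μ)
    (hpt : ∀ x, Real.exp (2 * σ x) * Qhat x
      = Q x + P' σ x + (1 / 2) * P (fun y => σ y ^ 2) x) :
    ∫ x, Qhat x ∂(μ.withDensity fun x => ENNReal.ofReal (Real.exp (2 * σ x)))
      = ∫ x, Q x ∂μ :=
  stmt4_general μ P P' hPsym hP'sym hP1 hP'1 Q Qhat σ hσmeas hQint hP'int hPint hpt
end

section
/- Suppose a linear operator P₄ satisfies the covariance law e^{((n+3)/2)σ}·P̂₄(u) = P₄(e^{((n-1)/2)σ} u) for all u in a subspace 𝒫, and that P₄ restricted to 𝒫 equals ((n-1)/2)·P'₄ with P'₄ regular at n = 1. Then multiplying by 2/(n-1) and letting n → 1 yields e^{2σ} P̂'₄(u) = P'₄(u) + P₄(σu) for all u ∈ 𝒫, using the expansion e^{((n-1)/2)σ} - 1 = ((n-1)/2)σ + O((n-1)²) and continuity of P₄ in its argument. -/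
/-!
Multiply the covariance law by `2/(n-1)` and split `e^{((n-1)/2)σ} u = u + (e^{((n-1)/2)σ} - 1) u`.
As `n → 1` the difference quotient `(2/(n-1)) (e^{((n-1)/2)σ} - 1)` tends to `σ`, the derivative of
`t ↦ e^{tσ}` at `0`, and joint continuity of `P₄` carries this limit through `P₄`; the two sides
then converge to `e^{2σ} P̂₄'(u)` and `P₄'(u) + P₄(σu)`.
-/

open Filter Topology

theorem tendsto_inv_smul_exp_smul_sub_one {𝕂 𝔸 : Type*} [RCLike 𝕂] [NormedRing 𝔸]
    [NormedAlgebra 𝕂 𝔸] [CompleteSpace 𝔸] (x : 𝔸) :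
    Tendsto (fun t : 𝕂 => t⁻¹ • (NormedSpace.exp (t • x) - 1)) (𝓝[≠] 0) (𝓝 x) := by
  have h := hasDerivAt_iff_tendsto_slope.1 (hasDerivAt_exp_smul_const (𝕂 := 𝕂) x 0)
  simp only [zero_smul, NormedSpace.exp_zero, one_mul] at h
  exact h.congr fun t => by rw [slope_def_module, sub_zero, zero_smul, NormedSpace.exp_zero]

theorem tendsto_sub_div_nhdsNE {𝕜 : Type*} [NontriviallyNormedField 𝕜] (a : 𝕜) {c : 𝕜}
    (hc : c ≠ 0) : Tendsto (fun t : 𝕜 => (t - a) / c) (𝓝[≠] a) (𝓝[≠] 0) := by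
  refine tendsto_nhdsWithin_of_tendsto_nhds_of_eventually_within _ ?_ ?_
  · exact (((continuous_sub_right a).div_const c).tendsto' a 0 (by simp)).mono_left
      nhdsWithin_le_nhds
  · filter_upwards [self_mem_nhdsWithin] with t ht
    simpa [sub_eq_zero, hc] using ht

theorem tendsto_div_smul_exp_div_smul_sub_one {𝔸 : Type*} [NormedRing 𝔸]
    [NormedAlgebra ℝ 𝔸] [CompleteSpace 𝔸] (a : ℝ) {c : ℝ} (hc : c ≠ 0) (x : 𝔸) :
    Tendsto (fun t : ℝ => (c / (t - a)) • (NormedSpace.exp (((t - a) / c) • x) - 1))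
      (𝓝[≠] a) (𝓝 x) := by
  simpa only [Function.comp_def, inv_div] using
    (tendsto_inv_smul_exp_smul_sub_one x).comp (tendsto_sub_div_nhdsNE a hc)

theorem smul_map_mul_eq_smul_map_add_map {R M : Type*} [Ring M] [CommSemiring R] [Algebra R M]
    (L : M →ₗ[R] M) (c : R) (e u : M) :
    c • L (e * u) = c • L u + L ((c • (e - 1)) * u) := by
  rw [smul_mul_assoc, map_smul, ← smul_add, ← map_add, sub_mul, one_mul, add_sub_cancel]

/-- Proof of the transformation law of the `P'`-operator by analytic continuation in
the dimension: from the covariance `e^{((n+3)/2)σ} P̂₄(u) = P₄(e^{((n-1)/2)σ} u)` on `Pl`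
and the factorizations `P₄ = ((n-1)/2) P₄'`, `P̂₄ = ((n-1)/2) P̂₄'` on `Pl` (regular at
`n = 1`, encoded as tendsto hypotheses), one obtains
`e^{2σ} P̂₄'(u) = P₄'(u) + P₄(σu)` for all `u ∈ Pl`. -/
theorem stmt15 {A : Type*} [NormedCommRing A] [NormedAlgebra ℝ A] [CompleteSpace A]
    (Pl : Submodule ℝ A) (σ : A)
    (P4 P4hat : ℝ → A →L[ℝ] A)
    (P4'1 P4hat'1 : A → A)
    (hcov : ∀ (n : ℝ), ∀ u ∈ Pl,
      NormedSpace.exp (((n + 3) / 2) • σ) * P4hat n u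
        = P4 n (NormedSpace.exp (((n - 1) / 2) • σ) * u))
    (hfac : ∀ u ∈ Pl,
      Tendsto (fun n : ℝ => (2 / (n - 1)) • P4 n u) (𝓝[≠] (1 : ℝ)) (𝓝 (P4'1 u)))
    (hfachat : ∀ u ∈ Pl,
      Tendsto (fun n : ℝ => (2 / (n - 1)) • P4hat n u) (𝓝[≠] (1 : ℝ)) (𝓝 (P4hat'1 u)))
    (hjoint : Continuous fun p : ℝ × A => P4 p.1 p.2) :
    ∀ u ∈ Pl, NormedSpace.exp ((2 : ℝ) • σ) * P4hat'1 u
      = P4'1 u + P4 1 (σ * u) := by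
  intro u hu
  have hexp : Tendsto (fun n : ℝ => NormedSpace.exp (((n + 3) / 2) • σ)) (𝓝[≠] 1)
      (𝓝 (NormedSpace.exp ((2 : ℝ) • σ))) :=
    ((differentiable_exp_smul_const ℝ σ).continuous.comp (by fun_prop)).tendsto' 1 _
      (by norm_num) |>.mono_left nhdsWithin_le_nhds
  have hlhs := hexp.mul (hfachat u hu)
  have hrhs : Tendsto (fun n : ℝ => (2 / (n - 1)) • P4 n u
      + P4 n ((2 / (n - 1)) • (NormedSpace.exp (((n - 1) / 2) • σ) - 1) * u))
      (𝓝[≠] 1) (𝓝 (P4'1 u + P4 1 (σ * u))) :=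
    (hfac u hu).add <| (hjoint.tendsto (1, σ * u)).comp <|
      (tendsto_id.mono_left nhdsWithin_le_nhds).prodMk_nhds
        ((tendsto_div_smul_exp_div_smul_sub_one 1 two_ne_zero σ).mul_const u)
  refine tendsto_nhds_unique (hlhs.congr fun n => ?_) hrhs
  rw [mul_smul_comm, hcov n u hu]
  exact smul_map_mul_eq_smul_map_add_map (P4 n).toLinearMap _ _ _
end
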